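/- Let n ≥ 2 be an integer and let A = ℂ[x,y,z]/(xⁿ − yz) be the coordinate ring of the Klein surface of type A_{n−1}. For each polynomial P ∈ ℂ[y], the assignment x ↦ x + yP(y), y ↦ y, z ↦ z + q_P(x,y), where q_P ∈ ℂ[x,y] is the polynomial ((x + yP(y))ⁿ − xⁿ)/y, induces a well-defined ℂ-algebra automorphism φ_P of A, and the map P ↦ φ_P is an injective group homomorphism from the additive group of ℂ[y] into the group of ℂ-algebra automorphisms of A. In particular, the automorphism group of A is infinite. -/

import Mathlib

open MvPolynomial

noncomputable section

/-- The ideal (xⁿ − yz) in ℂ[x,y,z]. -/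
def Ian (n : ℕ) : Ideal (MvPolynomial (Fin 3) ℂ) :=
  Ideal.span {(X 0 : MvPolynomial (Fin 3) ℂ) ^ n - X 1 * X 2}

/-- The coordinate ring A = ℂ[x,y,z]/(xⁿ − yz) of the Klein surface of type A_{n-1}. -/
abbrev Aan (n : ℕ) : Type := MvPolynomial (Fin 3) ℂ ⧸ Ian n

lemma pow_sub_pow_dvd' {R : Type*} [CommRing R] (a b : R) (n : ℕ) :
    ∃ q : R, (a + b) ^ n = a ^ n + b * q := by
  induction n with
  | zero => exact ⟨0, by ring⟩
  | succ n ih =>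
    obtain ⟨q, hq⟩ := ih
    exact ⟨a * q + a ^ n + b * q, by rw [pow_succ, hq]; ring⟩

def pP (P : Polynomial ℂ) : MvPolynomial (Fin 3) ℂ := Polynomial.aeval (X 1) P

def qP (n : ℕ) (P : Polynomial ℂ) : MvPolynomial (Fin 3) ℂ :=
  pP P * Classical.choose (pow_sub_pow_dvd' (X 0) (X 1 * pP P) n)

lemma hqP (n : ℕ) (P : Polynomial ℂ) :
    X 1 * qP n P = (X 0 + X 1 * pP P) ^ n - X 0 ^ n := by
  rw [qP]
  have := Classical.choose_spec (pow_sub_pow_dvd' (X 0) (X 1 * pP P) n)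
  linear_combination -this

def F (n : ℕ) (P : Polynomial ℂ) : MvPolynomial (Fin 3) ℂ →ₐ[ℂ] MvPolynomial (Fin 3) ℂ :=
  aeval ![X 0 + X 1 * pP P, X 1, X 2 + qP n P]

lemma F0 (n : ℕ) (P : Polynomial ℂ) : F n P (X 0) = X 0 + X 1 * pP P := by simp [F]
lemma F1 (n : ℕ) (P : Polynomial ℂ) : F n P (X 1) = X 1 := by simp [F]
lemma F2 (n : ℕ) (P : Polynomial ℂ) : F n P (X 2) = X 2 + qP n P := by simp [F]

lemma FpP (n : ℕ) (P Q : Polynomial ℂ) : F n P (pP Q) = pP Q := by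
  rw [pP, ← Polynomial.aeval_algHom_apply, F1]

lemma pP_add (P Q : Polynomial ℂ) : pP (P + Q) = pP P + pP Q := by
  simp [pP]

lemma FqP (n : ℕ) (P Q : Polynomial ℂ) :
    qP n P + F n P (qP n Q) = qP n (P + Q) := by
  apply mul_left_cancel₀ (MvPolynomial.X_ne_zero (R := ℂ) 1)
  have h1 := hqP n P
  have h2 : X 1 * F n P (qP n Q) = (X 0 + X 1 * pP P + X 1 * pP Q) ^ n - (X 0 + X 1 * pP P) ^ n := by
    have := congrArg (F n P) (hqP n Q)
    simp only [map_mul, map_sub, map_pow, map_add, F0, F1, FpP] at this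
    exact this
  have h3 := hqP n (P + Q)
  rw [pP_add] at h3
  rw [mul_add, h1, h2, h3]; ring

lemma Fcomp (n : ℕ) (P Q : Polynomial ℂ) : (F n P).comp (F n Q) = F n (P + Q) := by
  apply MvPolynomial.algHom_ext
  intro i
  fin_cases i
  · show F n P (F n Q (X 0)) = F n (P + Q) (X 0)
    simp only [F0, map_add, map_mul, F1, FpP, pP_add]; ring
  · show F n P (F n Q (X 1)) = F n (P + Q) (X 1)
    simp only [F1]
  · show F n P (F n Q (X 2)) = F n (P + Q) (X 2)
    simp only [F2, map_add]
    rw [add_assoc, FqP]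

lemma qP_zero (n : ℕ) : qP n 0 = 0 := by
  have := hqP n 0
  simp [pP] at this
  exact this

lemma F_zero (n : ℕ) : F n 0 = AlgHom.id ℂ _ := by
  apply MvPolynomial.algHom_ext
  intro i
  fin_cases i
  · simp [F0, pP]
  · simp [F1]
  · simp [F2, qP_zero]

lemma Fg (n : ℕ) (P : Polynomial ℂ) :
    F n P (X 0 ^ n - X 1 * X 2) = X 0 ^ n - X 1 * X 2 := by
  simp only [map_sub, map_pow, map_mul, F0, F1, F2]
  have := hqP n P
  linear_combination -this

lemma Fmem (n : ℕ) (P : Polynomial ℂ) (a : MvPolynomial (Fin 3) ℂ) (ha : a ∈ Ian n) :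
    F n P a ∈ Ian n := by
  rw [Ian, Ideal.mem_span_singleton] at *
  obtain ⟨c, rfl⟩ := ha
  exact ⟨F n P c, by rw [map_mul, Fg]⟩

def ψ (n : ℕ) (P : Polynomial ℂ) : Aan n →ₐ[ℂ] Aan n :=
  Ideal.Quotient.liftₐ (Ian n) ((Ideal.Quotient.mkₐ ℂ (Ian n)).comp (F n P))
    (fun a ha => by
      simp only [AlgHom.comp_apply, Ideal.Quotient.mkₐ_eq_mk, Ideal.Quotient.eq_zero_iff_mem]
      exact Fmem n P a ha)

lemma ψ_mk (n : ℕ) (P : Polynomial ℂ) (r : MvPolynomial (Fin 3) ℂ) :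
    ψ n P (Ideal.Quotient.mk (Ian n) r) = Ideal.Quotient.mk (Ian n) (F n P r) := by
  simp [ψ, Ideal.Quotient.liftₐ_apply]
  rfl

lemma ψcomp (n : ℕ) (P Q : Polynomial ℂ) (a : Aan n) :
    ψ n P (ψ n Q a) = ψ n (P + Q) a := by
  obtain ⟨r, rfl⟩ := Ideal.Quotient.mk_surjective a
  rw [ψ_mk, ψ_mk, ψ_mk, ← Fcomp]
  rfl

lemma ψ_zero (n : ℕ) (a : Aan n) : ψ n 0 a = a := by
  obtain ⟨r, rfl⟩ := Ideal.Quotient.mk_surjective a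
  rw [ψ_mk, F_zero]
  rfl

lemma ψ0 (n : ℕ) (P : Polynomial ℂ) : ψ n P (Ideal.Quotient.mk (Ian n) (X 0)) =
    Ideal.Quotient.mk (Ian n) (X 0 + X 1 * Polynomial.aeval (X 1) P) := by
  rw [ψ_mk, F0]; rfl

lemma ψ1 (n : ℕ) (P : Polynomial ℂ) : ψ n P (Ideal.Quotient.mk (Ian n) (X 1)) =
    Ideal.Quotient.mk (Ian n) (X 1) := by
  rw [ψ_mk, F1]

lemma ψ2 (n : ℕ) (P : Polynomial ℂ) : ψ n P (Ideal.Quotient.mk (Ian n) (X 2)) =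
    Ideal.Quotient.mk (Ian n) (X 2 + qP n P) := by
  rw [ψ_mk, F2]

theorem an_automorphisms (n : ℕ) (hn : 2 ≤ n) :
    ∃ Φ : Polynomial ℂ → (Aan n ≃ₐ[ℂ] Aan n),
      (∀ P : Polynomial ℂ,
        Φ P (Ideal.Quotient.mk (Ian n) (X 0)) =
            Ideal.Quotient.mk (Ian n) (X 0 + X 1 * Polynomial.aeval (X 1) P) ∧
        Φ P (Ideal.Quotient.mk (Ian n) (X 1)) = Ideal.Quotient.mk (Ian n) (X 1) ∧
        ∃ q : MvPolynomial (Fin 3) ℂ,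
          X 1 * q = (X 0 + X 1 * Polynomial.aeval (X 1) P) ^ n - X 0 ^ n ∧
          Φ P (Ideal.Quotient.mk (Ian n) (X 2)) =
            Ideal.Quotient.mk (Ian n) (X 2 + q)) ∧
      (∀ P Q : Polynomial ℂ, Φ (P + Q) = Φ P * Φ Q) ∧
      Function.Injective Φ ∧
      Infinite (Aan n ≃ₐ[ℂ] Aan n) := by
  set Φ : Polynomial ℂ → (Aan n ≃ₐ[ℂ] Aan n) := fun P =>
    AlgEquiv.ofAlgHom (ψ n P) (ψ n (-P))
      (AlgHom.ext fun a => by rw [AlgHom.comp_apply, ψcomp, add_neg_cancel, ψ_zero]; rfl)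
      (AlgHom.ext fun a => by rw [AlgHom.comp_apply, ψcomp, neg_add_cancel, ψ_zero]; rfl)
    with hΦ
  have hΦapp : ∀ P a, Φ P a = ψ n P a := fun P a => rfl
  have hinj : Function.Injective Φ := by
    intro P Q h
    have h0 : ψ n P (Ideal.Quotient.mk (Ian n) (X 0)) = ψ n Q (Ideal.Quotient.mk (Ian n) (X 0)) := by
      rw [← hΦapp, ← hΦapp, h]
    rw [ψ0, ψ0, Ideal.Quotient.eq] at h0
    have hd : ((X 0 : MvPolynomial (Fin 3) ℂ) ^ n - X 1 * X 2) ∣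
        ((X 1 : MvPolynomial (Fin 3) ℂ) * (Polynomial.aeval (X 1) P - Polynomial.aeval (X 1) Q)) := by
      rw [← Ideal.mem_span_singleton]
      have : ((X 0 : MvPolynomial (Fin 3) ℂ) + X 1 * Polynomial.aeval (X 1) P) - (X 0 + X 1 * Polynomial.aeval (X 1) Q)
          = X 1 * (Polynomial.aeval (X 1) P - Polynomial.aeval (X 1) Q) := by ring
      rw [← this]; exact h0
    obtain ⟨c, hc⟩ := hd
    set e : MvPolynomial (Fin 3) ℂ →ₐ[ℂ] Polynomial ℂ := aeval ![0, Polynomial.X, 0] with he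
    have hcc := congrArg e hc
    have he0 : e (X 0) = 0 := by simp [he]
    have he1 : e (X 1) = Polynomial.X := by simp [he]
    have he2 : e (X 2) = 0 := by simp [he]
    have heP : ∀ R : Polynomial ℂ, e (Polynomial.aeval (X 1) R) = R := by
      intro R
      rw [← Polynomial.aeval_algHom_apply, he1, Polynomial.aeval_X_left_apply]
    have hnz : n ≠ 0 := by omega
    have hz : Polynomial.X * (P - Q) = 0 := by
      simpa [he0, he1, he2, heP, zero_pow hnz] using hcc
    rcases mul_eq_zero.mp hz with h | h
    · exact absurd h Polynomial.X_ne_zero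
    · exact sub_eq_zero.mp h
  refine ⟨Φ, ?_, ?_, hinj, ?_⟩
  · intro P
    exact ⟨ψ0 n P, ψ1 n P, qP n P, hqP n P, ψ2 n P⟩
  · intro P Q
    ext a
    show ψ n (P + Q) a = ψ n P (ψ n Q a)
    rw [ψcomp]
  · exact Infinite.of_injective Φ hinj

end
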